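/- arXiv:1610.04740 — 2 statements merged into one kernel-verified Lean document; each statement's English description precedes it below -/
import Mathlib

section
/- For every real number x > 0, the integral H_{2,1}(x) = ∫₀^∞ (u+1)^{-2}(ux+1)^{-1} u^{3/2} du converges and equals (2π/√x + π)/(2(√x + 1)²). -/
open MeasureTheory Real Filter Topology

lemma sqrtTendstoAtTop : Tendsto Real.sqrt atTop atTop :=
  (tendsto_rpow_atTop (by norm_num : (0:ℝ) < 1/2)).congr fun x => (Real.sqrt_eq_rpow x).symm

lemma arctanSqrtLim : Tendsto (fun u : ℝ => Real.arctan (Real.sqrt u)) atTop (𝓝 (π/2)) :=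
  (tendsto_nhds_of_tendsto_nhdsWithin Real.tendsto_arctan_atTop).comp sqrtTendstoAtTop

lemma arctanConstSqrtLim (s : ℝ) (hs : 0 < s) :
    Tendsto (fun u : ℝ => Real.arctan (s * Real.sqrt u)) atTop (𝓝 (π/2)) :=
  (tendsto_nhds_of_tendsto_nhdsWithin Real.tendsto_arctan_atTop).comp
    (sqrtTendstoAtTop.const_mul_atTop hs)

lemma sqrtDivLim : Tendsto (fun u : ℝ => Real.sqrt u / (1 + u)) atTop (𝓝 0) := by
  have h1 : Tendsto (fun u : ℝ => ((Real.sqrt u)⁻¹ + Real.sqrt u)) atTop atTop :=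
    (tendsto_inv_atTop_zero.comp sqrtTendstoAtTop).add_atTop sqrtTendstoAtTop
  apply h1.inv_tendsto_atTop.congr'
  filter_upwards [eventually_gt_atTop (0:ℝ)] with u hu
  have ht : 0 < Real.sqrt u := Real.sqrt_pos.2 hu
  have h2 : (Real.sqrt u)^2 = u := Real.sq_sqrt hu.le
  rw [Pi.inv_apply, ← h2]
  field_simp
  rw [Real.sqrt_sq ht.le]

lemma sqrtDivSqLim : Tendsto (fun u : ℝ => Real.sqrt u / (1 + u)^2) atTop (𝓝 0) := by
  apply squeeze_zero' (g := fun u : ℝ => Real.sqrt u / (1 + u))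
  · filter_upwards [eventually_gt_atTop (0:ℝ)] with u hu
    positivity
  · filter_upwards [eventually_gt_atTop (0:ℝ)] with u hu
    apply div_le_div_of_nonneg_left (Real.sqrt_nonneg u) (by positivity)
    nlinarith
  · exact sqrtDivLim

lemma H21_aux (x : ℝ) (hx : 0 < x) (F : ℝ → ℝ) (L : ℝ)
    (hcont : ContinuousWithinAt F (Set.Ici 0) 0)
    (hF0 : F 0 = 0)
    (hderiv : ∀ u ∈ Set.Ioi (0:ℝ),
      HasDerivAt F ((u + 1) ^ (-2 : ℤ) * (u * x + 1)⁻¹ * u ^ ((3 : ℝ) / 2)) u)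
    (hlim : Tendsto F atTop (𝓝 L)) :
    IntegrableOn (fun u : ℝ => (u + 1) ^ (-2 : ℤ) * (u * x + 1)⁻¹ * u ^ ((3 : ℝ) / 2))
      (Set.Ioi 0) ∧
    ∫ u in Set.Ioi (0:ℝ), (u + 1) ^ (-2 : ℤ) * (u * x + 1)⁻¹ * u ^ ((3 : ℝ) / 2) = L := by
  have hpos : ∀ u ∈ Set.Ioi (0:ℝ),
      0 ≤ (u + 1) ^ (-2 : ℤ) * (u * x + 1)⁻¹ * u ^ ((3 : ℝ) / 2) := by
    intro u hu
    simp only [Set.mem_Ioi] at hu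
    have h1 : (0:ℝ) < u + 1 := by linarith
    have h2 : (0:ℝ) < u * x + 1 := by positivity
    positivity
  constructor
  · exact integrableOn_Ioi_deriv_of_nonneg hcont hderiv hpos hlim
  · rw [integral_Ioi_of_hasDerivAt_of_nonneg hcont hderiv hpos hlim, hF0, sub_zero]

/-- For every real `x > 0`, the integral
`H₂₁(x) = ∫₀^∞ (u+1)⁻² (ux+1)⁻¹ u^(3/2) du` converges and equals
`(2π/√x + π) / (2(√x+1)²)`. -/
theorem H_two_one_eval (x : ℝ) (hx : 0 < x) :
    IntegrableOn
      (fun u : ℝ => (u + 1) ^ (-2 : ℤ) * (u * x + 1)⁻¹ * u ^ ((3 : ℝ) / 2))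
      (Set.Ioi 0) ∧
    ∫ u in Set.Ioi (0 : ℝ), (u + 1) ^ (-2 : ℤ) * (u * x + 1)⁻¹ * u ^ ((3 : ℝ) / 2) =
      (2 * Real.pi / Real.sqrt x + Real.pi) / (2 * (Real.sqrt x + 1) ^ 2) := by
  have hs : 0 < Real.sqrt x := Real.sqrt_pos.2 hx
  have hs2 : Real.sqrt x ^ 2 = x := Real.sq_sqrt hx.le
  by_cases hx1 : x = 1
  · -- case x = 1
    subst hx1
    have key := H21_aux 1 hx
      (fun u => (3/4) * Real.arctan (Real.sqrt u)
        + (-5/4) * (Real.sqrt u / (1 + u)) + (1/2) * (Real.sqrt u / (1 + u)^2))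
      ((3/4) * (π/2) + (-5/4) * 0 + (1/2) * 0)
      (by
        apply ContinuousAt.continuousWithinAt
        have hc1 : ContinuousAt (fun u : ℝ => Real.arctan (Real.sqrt u)) 0 :=
          (Real.continuous_arctan.comp Real.continuous_sqrt).continuousAt
        have hc2 : ContinuousAt (fun u : ℝ => Real.sqrt u / (1 + u)) 0 :=
          ContinuousAt.div (Real.continuous_sqrt.continuousAt)
            (continuousAt_const.add continuousAt_id) (by norm_num)
        have hc3 : ContinuousAt (fun u : ℝ => Real.sqrt u / (1 + u)^2) 0 :=
          ContinuousAt.div (Real.continuous_sqrt.continuousAt)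
            ((continuousAt_const.add continuousAt_id).pow 2) (by norm_num)
        exact ((hc1.const_mul _).add (hc2.const_mul _)).add (hc3.const_mul _))
      (by simp)
      (by
        intro u hu
        simp only [Set.mem_Ioi] at hu
        have ht : 0 < Real.sqrt u := Real.sqrt_pos.2 hu
        have hu1 : (0:ℝ) < 1 + u := by linarith
        have hsq : HasDerivAt Real.sqrt (1/(2*Real.sqrt u)) u := Real.hasDerivAt_sqrt hu.ne'
        have h1 : HasDerivAt (fun v => Real.arctan (Real.sqrt v))
            (1/(1 + Real.sqrt u ^ 2) * (1/(2*Real.sqrt u))) u :=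
          (Real.hasDerivAt_arctan _).comp u hsq
        have h2 : HasDerivAt (fun v : ℝ => 1 + v) 1 u := by
          simpa using (hasDerivAt_id u).const_add (1:ℝ)
        have h3 : HasDerivAt (fun v => Real.sqrt v / (1 + v))
            ((1/(2*Real.sqrt u) * (1+u) - Real.sqrt u * 1)/(1+u)^2) u :=
          hsq.div h2 hu1.ne'
        have h4 : HasDerivAt (fun v => Real.sqrt v / (1 + v)^2)
            ((1/(2*Real.sqrt u) * (1+u)^2 - Real.sqrt u * ((2:ℕ) * (1+u)^1 * 1))/((1+u)^2)^2) u :=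
          hsq.div (h2.pow 2) (by positivity)
        have H := ((h1.const_mul (3/4:ℝ)).add (h3.const_mul (-5/4:ℝ))).add
          (h4.const_mul (1/2:ℝ))
        convert H using 1
        · rfl
        · rfl
        · rfl
        have hrw : u ^ ((3:ℝ)/2) = u * Real.sqrt u := by
          rw [show ((3:ℝ)/2) = 1 + 1/2 by norm_num, Real.rpow_add hu, Real.rpow_one,
            ← Real.sqrt_eq_rpow]
        have hz : (u+1:ℝ)^(-2:ℤ) = ((u+1)^2)⁻¹ := by
          rw [zpow_neg]; norm_cast
        rw [hrw, hz]
        set t := Real.sqrt u with htdef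
        have ht2 : t^2 = u := Real.sq_sqrt hu.le
        rw [← ht2]
        have hden : (0:ℝ) < 1 + t^2 := by positivity
        field_simp
        ring)
      (((arctanSqrtLim.const_mul (3/4:ℝ)).add (sqrtDivLim.const_mul (-5/4:ℝ))).add
        (sqrtDivSqLim.const_mul (1/2:ℝ)))
    refine ⟨key.1, ?_⟩
    rw [key.2, Real.sqrt_one]
    ring
  · -- case x ≠ 1
    set s := Real.sqrt x with hsdef
    have hs1 : s^2 - 1 ≠ 0 := by rw [hs2]; exact sub_ne_zero.2 hx1
    have hx1' : x - 1 ≠ 0 := sub_ne_zero.2 hx1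
    have key := H21_aux x hx
      (fun u => (2*(x-2)/(x-1)^2 + 1/(1-x)) * Real.arctan (Real.sqrt u)
        + (1/(1-x)) * (Real.sqrt u / (1 + u))
        + (2/(s*(x-1)^2)) * Real.arctan (s * Real.sqrt u))
      ((2*(x-2)/(x-1)^2 + 1/(1-x)) * (π/2) + (1/(1-x)) * 0 + (2/(s*(x-1)^2)) * (π/2))
      (by
        apply ContinuousAt.continuousWithinAt
        have hc1 : ContinuousAt (fun u : ℝ => Real.arctan (Real.sqrt u)) 0 :=
          (Real.continuous_arctan.comp Real.continuous_sqrt).continuousAt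
        have hc2 : ContinuousAt (fun u : ℝ => Real.sqrt u / (1 + u)) 0 :=
          ContinuousAt.div (Real.continuous_sqrt.continuousAt)
            (continuousAt_const.add continuousAt_id) (by norm_num)
        have hc3 : ContinuousAt (fun u : ℝ => Real.arctan (s * Real.sqrt u)) 0 :=
          (Real.continuous_arctan.comp (continuous_const.mul Real.continuous_sqrt)).continuousAt
        exact ((hc1.const_mul _).add (hc2.const_mul _)).add (hc3.const_mul _))
      (by simp)
      (by
        intro u hu
        simp only [Set.mem_Ioi] at hu
        have ht : 0 < Real.sqrt u := Real.sqrt_pos.2 hu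
        have hu1 : (0:ℝ) < 1 + u := by linarith
        have hsq : HasDerivAt Real.sqrt (1/(2*Real.sqrt u)) u := Real.hasDerivAt_sqrt hu.ne'
        have h1 : HasDerivAt (fun v => Real.arctan (Real.sqrt v))
            (1/(1 + Real.sqrt u ^ 2) * (1/(2*Real.sqrt u))) u :=
          (Real.hasDerivAt_arctan _).comp u hsq
        have h2 : HasDerivAt (fun v : ℝ => 1 + v) 1 u := by
          simpa using (hasDerivAt_id u).const_add (1:ℝ)
        have h3 : HasDerivAt (fun v => Real.sqrt v / (1 + v))
            ((1/(2*Real.sqrt u) * (1+u) - Real.sqrt u * 1)/(1+u)^2) u :=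
          hsq.div h2 hu1.ne'
        have h5 : HasDerivAt (fun v => s * Real.sqrt v) (s * (1/(2*Real.sqrt u))) u :=
          hsq.const_mul s
        have h6 : HasDerivAt (fun v => Real.arctan (s * Real.sqrt v))
            (1/(1 + (s * Real.sqrt u) ^ 2) * (s * (1/(2*Real.sqrt u)))) u :=
          (Real.hasDerivAt_arctan _).comp u h5
        have H := ((h1.const_mul (2*(x-2)/(x-1)^2 + 1/(1-x))).add
          (h3.const_mul (1/(1-x)))).add (h6.const_mul (2/(s*(x-1)^2)))
        convert H using 1
        · rfl
        · rfl
        · rfl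
        have hrw : u ^ ((3:ℝ)/2) = u * Real.sqrt u := by
          rw [show ((3:ℝ)/2) = 1 + 1/2 by norm_num, Real.rpow_add hu, Real.rpow_one,
            ← Real.sqrt_eq_rpow]
        have hz : (u+1:ℝ)^(-2:ℤ) = ((u+1)^2)⁻¹ := by
          rw [zpow_neg]; norm_cast
        rw [hrw, hz]
        set t := Real.sqrt u with htdef
        have ht2 : t^2 = u := Real.sq_sqrt hu.le
        rw [← ht2, ← hs2]
        have hd1 : (0:ℝ) < 1 + t^2 := by positivity
        have hd2 : (0:ℝ) < 1 + (s*t)^2 := by positivity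
        have hd3 : (0:ℝ) < t^2 * s^2 + 1 := by positivity
        have hs1' : s^2 - 1 ≠ 0 := by rw [hs2]; exact hx1'
        have hs1'' : (1:ℝ) - s^2 ≠ 0 := by
          intro h; apply hs1'; linarith
        field_simp
        ring)
      (((arctanSqrtLim.const_mul _).add (sqrtDivLim.const_mul _)).add
        ((arctanConstSqrtLim s hs).const_mul _))
    refine ⟨key.1, ?_⟩
    rw [key.2]
    rw [← hs2]
    have h1 : s + 1 ≠ 0 := by positivity
    have hs1'' : (1:ℝ) - s^2 ≠ 0 := by intro h; apply hs1; linarith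
    field_simp
    ring
end

section
/- The function (x,y) ↦ 30·H_{2,1}(x) − 24·H_{3,1}(x) + 32·H_{1,1,1}(x,y) − 112·H_{2,1,1}(x,y) + 64·H_{3,1,1}(x,y) − 16·H_{1,2,1}(x,y) + 32·H_{2,2,1}(x,y), defined on {(x,y) : x > 0, y > 0, x ≠ y}, tends to 2π as (x,y) → (1,1) within this domain. -/
open MeasureTheory Real

/-- `H₂₁(x) = ∫₀^∞ (u+1)⁻² (ux+1)⁻¹ u^(3/2) du`. -/
noncomputable def H21 (x : ℝ) : ℝ :=
  ∫ u in Set.Ioi (0 : ℝ), (u + 1) ^ (-2 : ℤ) * (u * x + 1)⁻¹ * u ^ ((3 : ℝ) / 2)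

/-- `H₃₁(x) = ∫₀^∞ (u+1)⁻³ (ux+1)⁻¹ u^(5/2) du`. -/
noncomputable def H31 (x : ℝ) : ℝ :=
  ∫ u in Set.Ioi (0 : ℝ), (u + 1) ^ (-3 : ℤ) * (u * x + 1)⁻¹ * u ^ ((5 : ℝ) / 2)

/-- `H₁₁₁(x,y) = ∫₀^∞ (u+1)⁻¹ (ux+1)⁻¹ (uy+1)⁻¹ u^(3/2) du`. -/
noncomputable def H111 (x y : ℝ) : ℝ :=
  ∫ u in Set.Ioi (0 : ℝ),
    (u + 1)⁻¹ * (u * x + 1)⁻¹ * (u * y + 1)⁻¹ * u ^ ((3 : ℝ) / 2)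

/-- `H₂₁₁(x,y) = ∫₀^∞ (u+1)⁻² (ux+1)⁻¹ (uy+1)⁻¹ u^(5/2) du`. -/
noncomputable def H211 (x y : ℝ) : ℝ :=
  ∫ u in Set.Ioi (0 : ℝ),
    (u + 1) ^ (-2 : ℤ) * (u * x + 1)⁻¹ * (u * y + 1)⁻¹ * u ^ ((5 : ℝ) / 2)

/-- `H₃₁₁(x,y) = ∫₀^∞ (u+1)⁻³ (ux+1)⁻¹ (uy+1)⁻¹ u^(7/2) du`. -/
noncomputable def H311 (x y : ℝ) : ℝ :=
  ∫ u in Set.Ioi (0 : ℝ),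
    (u + 1) ^ (-3 : ℤ) * (u * x + 1)⁻¹ * (u * y + 1)⁻¹ * u ^ ((7 : ℝ) / 2)

/-- `H₁₂₁(x,y) = ∫₀^∞ (u+1)⁻¹ (ux+1)⁻² (uy+1)⁻¹ u^(5/2) du`. -/
noncomputable def H121 (x y : ℝ) : ℝ :=
  ∫ u in Set.Ioi (0 : ℝ),
    (u + 1)⁻¹ * (u * x + 1) ^ (-2 : ℤ) * (u * y + 1)⁻¹ * u ^ ((5 : ℝ) / 2)

/-- `H₂₂₁(x,y) = ∫₀^∞ (u+1)⁻² (ux+1)⁻² (uy+1)⁻¹ u^(7/2) du`. -/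
noncomputable def H221 (x y : ℝ) : ℝ :=
  ∫ u in Set.Ioi (0 : ℝ),
    (u + 1) ^ (-2 : ℤ) * (u * x + 1) ^ (-2 : ℤ) * (u * y + 1)⁻¹ * u ^ ((7 : ℝ) / 2)

open Set Filter Topology


lemma aux_integrable (s : ℝ) (n : ℕ) (hs : -1 < s) (hn : s + 1 < n) :
    IntegrableOn (fun u : ℝ => u ^ s / (u + 1) ^ n) (Ioi 0) := by
  have hcont : ContinuousOn (fun u : ℝ => u ^ s / (u + 1) ^ n) (Ioi 0) := by
    intro u hu
    have hu0 : (0:ℝ) < u := hu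
    apply ContinuousWithinAt.div
    · exact (Real.continuousAt_rpow_const u s (Or.inl hu0.ne')).continuousWithinAt
    · exact Continuous.continuousWithinAt (by continuity)
    · positivity
  rw [← Ioc_union_Ioi_eq_Ioi (zero_le_one (α := ℝ))]
  apply IntegrableOn.union
  · have hg : IntegrableOn (fun u : ℝ => u ^ s) (Ioc 0 1) := by
      have := intervalIntegral.intervalIntegrable_rpow' (a := 0) (b := 1) hs
      rwa [intervalIntegrable_iff_integrableOn_Ioc_of_le zero_le_one] at this
    apply hg.mono' ((hcont.mono Ioc_subset_Ioi_self).aestronglyMeasurable measurableSet_Ioc)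
    rw [ae_restrict_iff' measurableSet_Ioc]
    filter_upwards with u hu
    have hu0 : (0:ℝ) < u := hu.1
    have h1 : (1:ℝ) ≤ (u+1)^n := one_le_pow₀ (by linarith)
    have key : u ^ s / (u+1)^n ≤ u ^ s := by
      calc u ^ s / (u+1)^n ≤ u ^ s / 1 := div_le_div_of_nonneg_left (by positivity) one_pos h1
        _ = u ^ s := div_one _
    rw [Real.norm_of_nonneg (by positivity)]
    exact key
  · have hg : IntegrableOn (fun u : ℝ => u ^ (s - n)) (Ioi 1) :=
      integrableOn_Ioi_rpow_of_lt (by push_cast; linarith) one_pos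
    apply hg.mono' ((hcont.mono (Ioi_subset_Ioi zero_le_one)).aestronglyMeasurable measurableSet_Ioi)
    rw [ae_restrict_iff' measurableSet_Ioi]
    filter_upwards with u hu
    have hu1 : (1:ℝ) < u := hu
    have hu0 : (0:ℝ) < u := by linarith
    have h1 : u ^ n ≤ (u+1)^n := by gcongr; linarith
    have hun : (0:ℝ) < u ^ n := by positivity
    have key : u ^ s / (u+1)^n ≤ u ^ (s - n) := by
      calc u ^ s / (u+1)^n ≤ u ^ s / u ^ n :=
            div_le_div_of_nonneg_left (by positivity) hun h1
        _ = u ^ (s - n) := by rw [Real.rpow_sub hu0, Real.rpow_natCast]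
    rw [Real.norm_of_nonneg (by positivity)]
    exact key

noncomputable def G (m₀ m₁ m₂ : ℕ) (s : ℝ) (p : ℝ × ℝ) : ℝ :=
  ∫ u in Ioi (0:ℝ), u ^ s / ((u + 1) ^ m₀ * (u * p.1 + 1) ^ m₁ * (u * p.2 + 1) ^ m₂)

lemma aux_cont (m₀ m₁ m₂ : ℕ) (s : ℝ) (hs : -1 < s) (hn : s + 1 < m₀ + m₁ + m₂) :
    ContinuousAt (G m₀ m₁ m₂ s) (1, 1) := by
  have hmem : {p : ℝ × ℝ | 1/2 < p.1 ∧ 1/2 < p.2} ∈ 𝓝 ((1:ℝ), (1:ℝ)) := by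
    apply IsOpen.mem_nhds
    · exact (isOpen_lt continuous_const continuous_fst).inter
        (isOpen_lt continuous_const continuous_snd)
    · constructor <;> norm_num
  apply continuousAt_of_dominated
    (bound := fun u => 2 ^ (m₁ + m₂) * (u ^ s / (u + 1) ^ (m₀ + m₁ + m₂)))
  · filter_upwards [hmem] with p hp
    apply ContinuousOn.aestronglyMeasurable _ measurableSet_Ioi
    intro u hu
    have hu0 : (0:ℝ) < u := hu
    apply ContinuousWithinAt.div
    · exact (Real.continuousAt_rpow_const u s (Or.inl hu0.ne')).continuousWithinAt
    · exact Continuous.continuousWithinAt (by continuity)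
    · have h1 : (0:ℝ) < u + 1 := by linarith
      have h2 : (0:ℝ) < u * p.1 + 1 := by nlinarith [hp.1]
      have h3 : (0:ℝ) < u * p.2 + 1 := by nlinarith [hp.2]
      positivity
  · filter_upwards [hmem] with p hp
    rw [ae_restrict_iff' measurableSet_Ioi]
    filter_upwards with u hu
    have hu0 : (0:ℝ) < u := hu
    have h1 : (0:ℝ) < u + 1 := by linarith
    have h2 : (u + 1)/2 ≤ u * p.1 + 1 := by nlinarith [hp.1]
    have h3 : (u + 1)/2 ≤ u * p.2 + 1 := by nlinarith [hp.2]
    have h2' : (0:ℝ) < u * p.1 + 1 := by nlinarith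
    have h3' : (0:ℝ) < u * p.2 + 1 := by nlinarith
    rw [Real.norm_of_nonneg (by positivity)]
    have hD : (u + 1) ^ m₀ * ((u+1)/2) ^ m₁ * ((u+1)/2) ^ m₂ ≤
        (u + 1) ^ m₀ * (u * p.1 + 1) ^ m₁ * (u * p.2 + 1) ^ m₂ := by
      gcongr <;> positivity
    have hD0 : (0:ℝ) < (u + 1) ^ m₀ * ((u+1)/2) ^ m₁ * ((u+1)/2) ^ m₂ := by positivity
    calc u ^ s / ((u + 1) ^ m₀ * (u * p.1 + 1) ^ m₁ * (u * p.2 + 1) ^ m₂)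
        ≤ u ^ s / ((u + 1) ^ m₀ * ((u+1)/2) ^ m₁ * ((u+1)/2) ^ m₂) :=
          div_le_div_of_nonneg_left (by positivity) hD0 hD
      _ = 2 ^ (m₁ + m₂) * (u ^ s / (u + 1) ^ (m₀ + m₁ + m₂)) := by
          rw [div_pow, div_pow, pow_add, pow_add]
          field_simp
          ring
  · exact (aux_integrable s (m₀ + m₁ + m₂) hs (by push_cast; exact_mod_cast hn)).const_mul _
  · rw [ae_restrict_iff' measurableSet_Ioi]
    filter_upwards with u hu
    have hu0 : (0:ℝ) < u := hu
    apply ContinuousAt.div continuousAt_const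
    · exact Continuous.continuousAt (by continuity)
    · have h1 : (0:ℝ) < u + 1 := by linarith
      have h2 : (0:ℝ) < u * (1:ℝ) + 1 := by linarith
      positivity

lemma aux_val (m₀ m₁ m₂ : ℕ) (s : ℝ) :
    G m₀ m₁ m₂ s (1, 1) = ∫ u in Ioi (0:ℝ), u ^ s / (u + 1) ^ (m₀ + m₁ + m₂) := by
  unfold G
  congr 1
  funext u
  rw [show u * (1:ℝ) + 1 = u + 1 by ring, pow_add, pow_add]

lemma tendsto_aux (k : ℕ) (hk : k ≠ 0) :
    Tendsto (fun t : ℝ => t / (1 + t ^ 2) ^ k) atTop (𝓝 0) := by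
  apply squeeze_zero' (g := fun t : ℝ => t⁻¹)
  · filter_upwards [eventually_ge_atTop (0:ℝ)] with t ht
    positivity
  · filter_upwards [eventually_ge_atTop (1:ℝ)] with t ht
    have h0 : (0:ℝ) < t ^ 2 := by positivity
    have h1 : t ^ 2 ≤ (1 + t ^ 2) ^ k := by
      calc t ^ 2 ≤ 1 + t ^ 2 := by linarith
        _ ≤ (1 + t ^ 2) ^ k := le_self_pow₀ (by nlinarith) hk
    calc t / (1 + t ^ 2) ^ k ≤ t / t ^ 2 := div_le_div_of_nonneg_left (by linarith) h0 h1
      _ = t⁻¹ := by rw [sq]; field_simp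
  · exact tendsto_inv_atTop_zero

lemma aux_subst (k n : ℕ) :
    (∫ u in Ioi (0:ℝ), u ^ ((2 * k + 1 : ℝ) / 2) / (u + 1) ^ n)
      = ∫ t in Ioi (0:ℝ), 2 * t ^ (2 * k + 1) * t / (1 + t ^ 2) ^ n := by
  rw [← integral_comp_rpow_Ioi (fun u => u ^ ((2 * k + 1 : ℝ) / 2) / (u + 1) ^ n)
        (p := 2) two_ne_zero]
  apply setIntegral_congr_fun measurableSet_Ioi
  intro t ht
  have ht0 : (0:ℝ) < t := ht
  have h2 : t ^ (2:ℝ) = t ^ 2 := by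
    rw [show (2:ℝ) = ((2:ℕ):ℝ) by norm_num, Real.rpow_natCast]
  have h3 : (t ^ 2 : ℝ) ^ ((2 * k + 1 : ℝ) / 2) = t ^ (2 * k + 1) := by
    rw [← Real.rpow_natCast t 2, ← Real.rpow_mul ht0.le, ← Real.rpow_natCast t (2 * k + 1)]
    congr 1
    push_cast
    ring
  simp only [smul_eq_mul, h2, h3]
  rw [show |(2:ℝ)| = 2 by norm_num, show (2:ℝ) - 1 = 1 by norm_num, Real.rpow_one,
    show t ^ 2 + 1 = 1 + t ^ 2 by ring]
  ring

lemma tendsto_aux1 : Tendsto (fun t : ℝ => t / (1 + t ^ 2)) atTop (𝓝 0) := by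
  simpa using tendsto_aux 1 one_ne_zero

lemma intA : (∫ t in Ioi (0:ℝ), 2 * t ^ 3 * t / (1 + t ^ 2) ^ 3) = 3 * π / 8 := by
  have hderiv : ∀ x ∈ Ici (0:ℝ), HasDerivAt (fun t : ℝ =>
      3/4 * arctan t - 5/4 * (t / (1 + t ^ 2)) + 1/2 * (t / (1 + t ^ 2) ^ 2))
      (2 * x ^ 3 * x / (1 + x ^ 2) ^ 3) x := by
    intro x _
    have hne : (1 + x ^ 2 : ℝ) ≠ 0 := by positivity
    have h0 : HasDerivAt (fun t : ℝ => 1 + t ^ 2) (2 * x) x := by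
      simpa using (hasDerivAt_pow 2 x).const_add 1
    have h1 := (hasDerivAt_arctan x).const_mul (3/4 : ℝ)
    have h2 := ((hasDerivAt_id x).div h0 hne).const_mul (5/4 : ℝ)
    have h3 := ((hasDerivAt_id x).div (h0.pow 2) (pow_ne_zero 2 hne)).const_mul (1/2 : ℝ)
    refine ((h1.sub h2).add h3).congr_deriv ?_
    simp only [id, Pi.pow_apply]
    field_simp
    ring
  have hint : IntegrableOn (fun t : ℝ => 2 * t ^ 3 * t / (1 + t ^ 2) ^ 3) (Ioi 0) := by
    apply Integrable.mono' ((integrable_inv_one_add_sq.const_mul 2).integrableOn)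
    · apply Continuous.aestronglyMeasurable
      apply Continuous.div (by continuity) (by continuity)
      intro x; positivity
    · apply ae_of_all
      intro t
      have e : 2 * t ^ 3 * t = 2 * t ^ 4 := by ring
      rw [e, Real.norm_of_nonneg (by positivity), ← div_eq_mul_inv,
        div_le_div_iff₀ (by positivity) (by positivity)]
      nlinarith [sq_nonneg t, sq_nonneg (t ^ 2), sq_nonneg (1 - t ^ 2)]
  have htend : Tendsto (fun t : ℝ =>
      3/4 * arctan t - 5/4 * (t / (1 + t ^ 2)) + 1/2 * (t / (1 + t ^ 2) ^ 2))
      atTop (𝓝 (3 * π / 8)) := by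
    have h := (((tendsto_nhds_of_tendsto_nhdsWithin tendsto_arctan_atTop).const_mul
      (3/4 : ℝ)).sub (tendsto_aux1.const_mul (5/4 : ℝ))).add
      ((tendsto_aux 2 two_ne_zero).const_mul (1/2 : ℝ))
    convert h using 1
    ring
  rw [integral_Ioi_of_hasDerivAt_of_tendsto' hderiv hint htend]
  simp [arctan_zero]

lemma intB : (∫ t in Ioi (0:ℝ), 2 * t ^ 5 * t / (1 + t ^ 2) ^ 4) = 5 * π / 16 := by
  have hderiv : ∀ x ∈ Ici (0:ℝ), HasDerivAt (fun t : ℝ =>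
      5/8 * arctan t - 11/8 * (t / (1 + t ^ 2)) + 13/12 * (t / (1 + t ^ 2) ^ 2)
        - 1/3 * (t / (1 + t ^ 2) ^ 3))
      (2 * x ^ 5 * x / (1 + x ^ 2) ^ 4) x := by
    intro x _
    have hne : (1 + x ^ 2 : ℝ) ≠ 0 := by positivity
    have h0 : HasDerivAt (fun t : ℝ => 1 + t ^ 2) (2 * x) x := by
      simpa using (hasDerivAt_pow 2 x).const_add 1
    have h1 := (hasDerivAt_arctan x).const_mul (5/8 : ℝ)
    have h2 := ((hasDerivAt_id x).div h0 hne).const_mul (11/8 : ℝ)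
    have h3 := ((hasDerivAt_id x).div (h0.pow 2) (pow_ne_zero 2 hne)).const_mul (13/12 : ℝ)
    have h4 := ((hasDerivAt_id x).div (h0.pow 3) (pow_ne_zero 3 hne)).const_mul (1/3 : ℝ)
    refine (((h1.sub h2).add h3).sub h4).congr_deriv ?_
    simp only [id, Pi.pow_apply]
    field_simp
    ring
  have hint : IntegrableOn (fun t : ℝ => 2 * t ^ 5 * t / (1 + t ^ 2) ^ 4) (Ioi 0) := by
    apply Integrable.mono' ((integrable_inv_one_add_sq.const_mul 2).integrableOn)
    · apply Continuous.aestronglyMeasurable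
      apply Continuous.div (by continuity) (by continuity)
      intro x; positivity
    · apply ae_of_all
      intro t
      have e : 2 * t ^ 5 * t = 2 * t ^ 6 := by ring
      have key : t ^ 6 ≤ (1 + t ^ 2) ^ 3 := by
        calc t ^ 6 = (t ^ 2) ^ 3 := by ring
          _ ≤ (1 + t ^ 2) ^ 3 := by gcongr <;> nlinarith [sq_nonneg t]
      rw [e, Real.norm_of_nonneg (by positivity), ← div_eq_mul_inv,
        div_le_div_iff₀ (by positivity) (by positivity)]
      have h1 : (0:ℝ) < 1 + t ^ 2 := by positivity
      calc 2 * t ^ 6 * (1 + t ^ 2) ≤ 2 * (1 + t ^ 2) ^ 3 * (1 + t ^ 2) := by nlinarith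
        _ = 2 * (1 + t ^ 2) ^ 4 := by ring
  have htend : Tendsto (fun t : ℝ =>
      5/8 * arctan t - 11/8 * (t / (1 + t ^ 2)) + 13/12 * (t / (1 + t ^ 2) ^ 2)
        - 1/3 * (t / (1 + t ^ 2) ^ 3))
      atTop (𝓝 (5 * π / 16)) := by
    have h := ((((tendsto_nhds_of_tendsto_nhdsWithin tendsto_arctan_atTop).const_mul
      (5/8 : ℝ)).sub (tendsto_aux1.const_mul (11/8 : ℝ))).add
      ((tendsto_aux 2 two_ne_zero).const_mul (13/12 : ℝ))).sub
      ((tendsto_aux 3 three_ne_zero).const_mul (1/3 : ℝ))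
    convert h using 1
    ring
  rw [integral_Ioi_of_hasDerivAt_of_tendsto' hderiv hint htend]
  simp [arctan_zero]

lemma intC : (∫ t in Ioi (0:ℝ), 2 * t ^ 7 * t / (1 + t ^ 2) ^ 5) = 35 * π / 128 := by
  have hderiv : ∀ x ∈ Ici (0:ℝ), HasDerivAt (fun t : ℝ =>
      35/64 * arctan t - 93/64 * (t / (1 + t ^ 2)) + 163/96 * (t / (1 + t ^ 2) ^ 2)
        - 25/24 * (t / (1 + t ^ 2) ^ 3) + 1/4 * (t / (1 + t ^ 2) ^ 4))
      (2 * x ^ 7 * x / (1 + x ^ 2) ^ 5) x := by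
    intro x _
    have hne : (1 + x ^ 2 : ℝ) ≠ 0 := by positivity
    have h0 : HasDerivAt (fun t : ℝ => 1 + t ^ 2) (2 * x) x := by
      simpa using (hasDerivAt_pow 2 x).const_add 1
    have h1 := (hasDerivAt_arctan x).const_mul (35/64 : ℝ)
    have h2 := ((hasDerivAt_id x).div h0 hne).const_mul (93/64 : ℝ)
    have h3 := ((hasDerivAt_id x).div (h0.pow 2) (pow_ne_zero 2 hne)).const_mul (163/96 : ℝ)
    have h4 := ((hasDerivAt_id x).div (h0.pow 3) (pow_ne_zero 3 hne)).const_mul (25/24 : ℝ)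
    have h5 := ((hasDerivAt_id x).div (h0.pow 4) (pow_ne_zero 4 hne)).const_mul (1/4 : ℝ)
    refine ((((h1.sub h2).add h3).sub h4).add h5).congr_deriv ?_
    simp only [id, Pi.pow_apply]
    field_simp
    ring
  have hint : IntegrableOn (fun t : ℝ => 2 * t ^ 7 * t / (1 + t ^ 2) ^ 5) (Ioi 0) := by
    apply Integrable.mono' ((integrable_inv_one_add_sq.const_mul 2).integrableOn)
    · apply Continuous.aestronglyMeasurable
      apply Continuous.div (by continuity) (by continuity)
      intro x; positivity
    · apply ae_of_all
      intro t
      have e : 2 * t ^ 7 * t = 2 * t ^ 8 := by ring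
      have key : t ^ 8 ≤ (1 + t ^ 2) ^ 4 := by
        calc t ^ 8 = (t ^ 2) ^ 4 := by ring
          _ ≤ (1 + t ^ 2) ^ 4 := by gcongr <;> nlinarith [sq_nonneg t]
      rw [e, Real.norm_of_nonneg (by positivity), ← div_eq_mul_inv,
        div_le_div_iff₀ (by positivity) (by positivity)]
      have h1 : (0:ℝ) < 1 + t ^ 2 := by positivity
      calc 2 * t ^ 8 * (1 + t ^ 2) ≤ 2 * (1 + t ^ 2) ^ 4 * (1 + t ^ 2) := by nlinarith
        _ = 2 * (1 + t ^ 2) ^ 5 := by ring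
  have htend : Tendsto (fun t : ℝ =>
      35/64 * arctan t - 93/64 * (t / (1 + t ^ 2)) + 163/96 * (t / (1 + t ^ 2) ^ 2)
        - 25/24 * (t / (1 + t ^ 2) ^ 3) + 1/4 * (t / (1 + t ^ 2) ^ 4))
      atTop (𝓝 (35 * π / 128)) := by
    have h := (((((tendsto_nhds_of_tendsto_nhdsWithin tendsto_arctan_atTop).const_mul
      (35/64 : ℝ)).sub (tendsto_aux1.const_mul (93/64 : ℝ))).add
      ((tendsto_aux 2 two_ne_zero).const_mul (163/96 : ℝ))).sub
      ((tendsto_aux 3 three_ne_zero).const_mul (25/24 : ℝ))).add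
      ((tendsto_aux 4 four_ne_zero).const_mul (1/4 : ℝ))
    convert h using 1
    ring
  rw [integral_Ioi_of_hasDerivAt_of_tendsto' hderiv hint htend]
  simp [arctan_zero]

lemma zpow_neg2 (a : ℝ) : a ^ (-2:ℤ) = (a ^ 2)⁻¹ := by
  rw [zpow_neg]; norm_cast

lemma zpow_neg3 (a : ℝ) : a ^ (-3:ℤ) = (a ^ 3)⁻¹ := by
  rw [zpow_neg]; norm_cast

lemma valA : (∫ u in Ioi (0:ℝ), u ^ ((3:ℝ)/2) / (u + 1) ^ 3) = 3 * π / 8 := by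
  have h := aux_subst 1 3
  norm_num at h
  rw [h, ← intA]

lemma valB : (∫ u in Ioi (0:ℝ), u ^ ((5:ℝ)/2) / (u + 1) ^ 4) = 5 * π / 16 := by
  have h := aux_subst 2 4
  norm_num at h
  rw [h, ← intB]

lemma valC : (∫ u in Ioi (0:ℝ), u ^ ((7:ℝ)/2) / (u + 1) ^ 5) = 35 * π / 128 := by
  have h := aux_subst 3 5
  norm_num at h
  rw [h, ← intC]

/-- The function
`(x,y) ↦ 30H₂₁(x) − 24H₃₁(x) + 32H₁₁₁(x,y) − 112H₂₁₁(x,y) + 64H₃₁₁(x,y)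
  − 16H₁₂₁(x,y) + 32H₂₂₁(x,y)`,
defined on `{(x,y) : x > 0, y > 0, x ≠ y}`, tends to `2π` as `(x,y) → (1,1)`
within this domain. -/
theorem limit_H_combination_two_pi :
    Filter.Tendsto
      (fun p : ℝ × ℝ =>
        30 * H21 p.1 - 24 * H31 p.1 + 32 * H111 p.1 p.2 - 112 * H211 p.1 p.2 +
          64 * H311 p.1 p.2 - 16 * H121 p.1 p.2 + 32 * H221 p.1 p.2)
      (nhdsWithin (1, 1) {p : ℝ × ℝ | 0 < p.1 ∧ 0 < p.2 ∧ p.1 ≠ p.2})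
      (nhds (2 * Real.pi)) := by
  have hfun : (fun p : ℝ × ℝ =>
        30 * H21 p.1 - 24 * H31 p.1 + 32 * H111 p.1 p.2 - 112 * H211 p.1 p.2 +
          64 * H311 p.1 p.2 - 16 * H121 p.1 p.2 + 32 * H221 p.1 p.2)
      = (fun p : ℝ × ℝ =>
        30 * G 2 1 0 ((3:ℝ)/2) p - 24 * G 3 1 0 ((5:ℝ)/2) p + 32 * G 1 1 1 ((3:ℝ)/2) p
          - 112 * G 2 1 1 ((5:ℝ)/2) p + 64 * G 3 1 1 ((7:ℝ)/2) p - 16 * G 1 2 1 ((5:ℝ)/2) p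
          + 32 * G 2 2 1 ((7:ℝ)/2) p) := by
    funext p
    have e1 : H21 p.1 = G 2 1 0 ((3:ℝ)/2) p := by
      unfold H21 G; congr 1; funext u
      simp only [zpow_neg2, pow_zero, pow_one, mul_one, div_eq_mul_inv, mul_inv]
      ring
    have e2 : H31 p.1 = G 3 1 0 ((5:ℝ)/2) p := by
      unfold H31 G; congr 1; funext u
      simp only [zpow_neg3, pow_zero, pow_one, mul_one, div_eq_mul_inv, mul_inv]
      ring
    have e3 : H111 p.1 p.2 = G 1 1 1 ((3:ℝ)/2) p := by
      unfold H111 G; congr 1; funext u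
      simp only [pow_one, div_eq_mul_inv, mul_inv]
      ring
    have e4 : H211 p.1 p.2 = G 2 1 1 ((5:ℝ)/2) p := by
      unfold H211 G; congr 1; funext u
      simp only [zpow_neg2, pow_one, div_eq_mul_inv, mul_inv]
      ring
    have e5 : H311 p.1 p.2 = G 3 1 1 ((7:ℝ)/2) p := by
      unfold H311 G; congr 1; funext u
      simp only [zpow_neg3, pow_one, div_eq_mul_inv, mul_inv]
      ring
    have e6 : H121 p.1 p.2 = G 1 2 1 ((5:ℝ)/2) p := by
      unfold H121 G; congr 1; funext u
      simp only [zpow_neg2, pow_one, div_eq_mul_inv, mul_inv]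
      ring
    have e7 : H221 p.1 p.2 = G 2 2 1 ((7:ℝ)/2) p := by
      unfold H221 G; congr 1; funext u
      simp only [zpow_neg2, pow_one, div_eq_mul_inv, mul_inv]
      ring
    rw [e1, e2, e3, e4, e5, e6, e7]
  rw [hfun]
  set f := fun p : ℝ × ℝ =>
        30 * G 2 1 0 ((3:ℝ)/2) p - 24 * G 3 1 0 ((5:ℝ)/2) p + 32 * G 1 1 1 ((3:ℝ)/2) p
          - 112 * G 2 1 1 ((5:ℝ)/2) p + 64 * G 3 1 1 ((7:ℝ)/2) p - 16 * G 1 2 1 ((5:ℝ)/2) p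
          + 32 * G 2 2 1 ((7:ℝ)/2) p with hf
  have hc : ContinuousAt f (1, 1) := by
    have c1 := aux_cont 2 1 0 ((3:ℝ)/2) (by norm_num) (by norm_num)
    have c2 := aux_cont 3 1 0 ((5:ℝ)/2) (by norm_num) (by norm_num)
    have c3 := aux_cont 1 1 1 ((3:ℝ)/2) (by norm_num) (by norm_num)
    have c4 := aux_cont 2 1 1 ((5:ℝ)/2) (by norm_num) (by norm_num)
    have c5 := aux_cont 3 1 1 ((7:ℝ)/2) (by norm_num) (by norm_num)
    have c6 := aux_cont 1 2 1 ((5:ℝ)/2) (by norm_num) (by norm_num)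
    have c7 := aux_cont 2 2 1 ((7:ℝ)/2) (by norm_num) (by norm_num)
    exact ((((((continuousAt_const.mul c1).sub (continuousAt_const.mul c2)).add
      (continuousAt_const.mul c3)).sub (continuousAt_const.mul c4)).add
      (continuousAt_const.mul c5)).sub (continuousAt_const.mul c6)).add
      (continuousAt_const.mul c7)
  have hval : f (1, 1) = 2 * π := by
    rw [hf]
    simp only
    rw [aux_val, aux_val, aux_val, aux_val, aux_val, aux_val, aux_val]
    norm_num
    rw [valA, valB, valC]
    ring
  have ht := hc.tendsto
  rw [hval] at ht
  exact ht.mono_left nhdsWithin_le_nhds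
end
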